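/- Optimality upper bound on the type-II error exponent (unbalanced sample sizes): Let X be a Polish space, let P ≠ Q be Borel probability measures on X with 0 < D(P‖Q) < ∞, let n = n_t, m = m_t be sequences of positive integers tending to infinity with n_t/m_t → ∞, and let 0 < α < 1. Let A'(n,m) ⊆ X^n × X^m be measurable acceptance regions that form an asymptotically level α two-sample test, i.e., for every Borel probability measure R, limsup_{t→∞} (R^{⊗n_t} ⊗ R^{⊗m_t})( complement of A'(n_t,m_t) ) ≤ α. Then the type-II error probabilities β'_{n,m} = (P^{⊗n} ⊗ Q^{⊗m})(A'(n,m)) satisfy liminf_{t→∞} −(1/m_t) · log β'_{n_t,m_t} ≤ D(P‖Q). -/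

import Mathlib

open MeasureTheory Filter Set
open scoped ENNReal NNReal

noncomputable section

/-- The empirical measure of the sample `x = (x 1, …, x n)`:  `(1/n) ∑ i, δ_{x i}`. -/
def empMeas {X : Type*} [MeasurableSpace X] {n : ℕ} (x : Fin n → X) : Measure X :=
  (n : ℝ≥0∞)⁻¹ • ∑ i, Measure.dirac (x i)

lemma empMeas_isProb {X : Type*} [MeasurableSpace X] {n : ℕ} (hn : n ≠ 0) (x : Fin n → X) :
    IsProbabilityMeasure (empMeas x) := by
  constructor
  simp only [empMeas, Measure.smul_apply, Measure.finsetSum_apply, measure_univ,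
    Finset.sum_const, Finset.card_univ, Fintype.card_fin, nsmul_eq_mul, mul_one, smul_eq_mul]
  exact ENNReal.inv_mul_cancel (by exact_mod_cast hn) (ENNReal.natCast_ne_top n)

/-- The empirical measure, as a probability measure (requires `n ≠ 0`). -/
def empProb {X : Type*} [MeasurableSpace X] {n : ℕ} (hn : n ≠ 0) (x : Fin n → X) :
    ProbabilityMeasure X := ⟨empMeas x, empMeas_isProb hn x⟩

open Classical in
/-- Kullback–Leibler divergence `D(R‖P) = ∫ log (dR/dP) dR` if `R ≪ P` (and the integral is
well defined), `+∞` otherwise. -/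
def KL {X : Type*} [MeasurableSpace X] (R P : Measure X) : ℝ≥0∞ :=
  if R ≪ P ∧ Integrable (llr R P) R then ENNReal.ofReal (∫ x, llr R P x ∂ R) else ⊤

/-- Extended-real logarithm of an extended-nonnegative real, with `elog 0 = ⊥`. -/
def elog (x : ℝ≥0∞) : EReal :=
  if x = 0 then ⊥ else if x = ⊤ then ⊤ else ((Real.log x.toReal : ℝ) : EReal)

/-! Apply the level condition with `R = P` and fix `r > D(P‖Q)`. By the weak law of large
numbers the samples `y ∈ Xᵐ` with `∑ i, llr P Q (y i) ≤ m r` have `Pᵐ`-probability tending to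
one, so eventually `A` meets `Xⁿ × {such y}` in `Pⁿ ⊗ Pᵐ`-probability at least `(1 - α) / 3`.
There the density `∏ i, dP/dQ (y i)` of `Pᵐ` with respect to `Qᵐ` is at most `exp (m r)`, hence
`β ≥ exp (-m r) (1 - α) / 3` and `-(1/m) log β ≤ r + O(1/m)`. -/

section

open ProbabilityTheory Real Topology

variable {X : Type*} [MeasurableSpace X]

lemma KL_lt_top_iff {R P : Measure X} : KL R P < ⊤ ↔ R ≪ P ∧ Integrable (llr R P) R := by
  unfold KL
  split_ifs with h <;> simp [h]

theorem ae_tendsto_average_infinitePi (μ : Measure X) [IsProbabilityMeasure μ] {f : X → ℝ}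
    (hfm : Measurable f) (hf : Integrable f μ) :
    ∀ᵐ ω ∂(Measure.infinitePi fun _ : ℕ => μ),
      Tendsto (fun k : ℕ => (k : ℝ)⁻¹ • ∑ i ∈ Finset.range k, f (ω i)) atTop
        (𝓝 (∫ x, f x ∂μ)) := by
  have heval : ∀ i, MeasurePreserving (fun ω : ℕ → X => ω i)
      (Measure.infinitePi fun _ => μ) μ := measurePreserving_eval_infinitePi _
  have hident : ∀ i, IdentDistrib (fun ω : ℕ → X => ω i) (fun ω => ω 0)
      (Measure.infinitePi fun _ => μ) (Measure.infinitePi fun _ => μ) := fun i =>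
    ⟨(heval i).measurable.aemeasurable, (heval 0).measurable.aemeasurable,
      by rw [(heval i).map_eq, (heval 0).map_eq]⟩
  have hmean : ∫ x, f x ∂μ = ∫ ω, f (ω 0) ∂(Measure.infinitePi fun _ => μ) := by
    rw [← integral_map (heval 0).measurable.aemeasurable hfm.aestronglyMeasurable,
      (heval 0).map_eq]
  rw [hmean]
  exact strong_law_ae (fun i (ω : ℕ → X) => f (ω i))
    ((heval 0).integrable_comp_of_integrable hf)
    (fun i j hij => (iIndepFun_infinitePi (X := fun _ => f) fun _ => hfm).indepFun hij)
    fun i => (hident i).comp hfm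

theorem tendsto_measure_pi_sum_gt (μ : Measure X) [IsProbabilityMeasure μ] {f : X → ℝ}
    (hfm : Measurable f) (hf : Integrable f μ) {r : ℝ} (hr : ∫ x, f x ∂μ < r) :
    Tendsto (fun k : ℕ => (Measure.pi fun _ : Fin k => μ) {y | k * r < ∑ i, f (y i)})
      atTop (𝓝 0) := by
  set ν := Measure.infinitePi fun _ : ℕ => μ
  have hlaw : ∀ k : ℕ, ν.map (fun ω (i : Fin k) => ω i) = Measure.pi fun _ => μ := fun k => by
    rw [Measure.map_infinitePi_infinitePi_of_inj Fin.val_injective, Measure.infinitePi_eq_pi]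
  have hinMeasure : TendstoInMeasure ν
      (fun (k : ℕ) (ω : ℕ → X) => (k : ℝ)⁻¹ • ∑ i ∈ Finset.range k, f (ω i)) atTop
      (fun _ => ∫ x, f x ∂μ) :=
    tendstoInMeasure_of_tendsto_ae (fun k => Measurable.aestronglyMeasurable (by fun_prop))
      (ae_tendsto_average_infinitePi μ hfm hf)
  refine tendsto_of_tendsto_of_tendsto_of_le_of_le' tendsto_const_nhds
    (hinMeasure (ENNReal.ofReal (r - ∫ x, f x ∂μ)) (by simpa using hr))
    (Eventually.of_forall fun _ => zero_le) ?_
  filter_upwards [eventually_gt_atTop 0] with k hk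
  rw [← hlaw k, Measure.map_apply (by fun_prop)
    (measurableSet_lt measurable_const (by fun_prop))]
  refine measure_mono fun ω hω => ?_
  simp only [mem_preimage, mem_ofPred_eq, Fin.sum_univ_eq_sum_range (fun i => f (ω i))] at hω ⊢
  rw [edist_dist, Real.dist_eq]
  refine ENNReal.ofReal_le_ofReal (le_abs.2 (Or.inl ?_))
  rw [smul_eq_mul, le_sub_iff_add_le, sub_add_cancel, ← div_eq_inv_mul,
    le_div_iff₀ (by positivity)]
  linarith

lemma pi_eq_withDensity_prod_rnDeriv {ι : Type*} [Fintype ι] {μ ν : Measure X} [SigmaFinite μ]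
    [IsProbabilityMeasure ν] (hμν : μ ≪ ν) :
    Measure.pi (fun _ : ι => μ)
      = (Measure.pi fun _ : ι => ν).withDensity fun y => ∏ i, μ.rnDeriv ν (y i) := by
  classical
  refine Measure.pi_eq fun s hs => ?_
  have hind : (univ.pi s).indicator (fun y : ι → X => ∏ i, μ.rnDeriv ν (y i))
      = fun y => ∏ i, (s i).indicator (μ.rnDeriv ν) (y i) := by
    ext y
    simp [indicator_apply, Finset.prod_ite_zero]
  have hmeas : ∀ i, Measurable ((s i).indicator (μ.rnDeriv ν)) :=
    fun i => (Measure.measurable_rnDeriv μ ν).indicator (hs i)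
  rw [withDensity_apply _ (.univ_pi hs), ← lintegral_indicator (.univ_pi hs), hind,
    lintegral_prod_eq_prod_lintegral_of_indepFun _ _
      (iIndepFun_pi fun i => (hmeas i).aemeasurable)
      fun i => (hmeas i).comp (measurable_pi_apply i)]
  refine Finset.prod_congr rfl fun i _ => ?_
  rw [(measurePreserving_eval _ i).lintegral_comp (hmeas i), lintegral_indicator (hs i),
    Measure.setLIntegral_rnDeriv hμν]

lemma rnDeriv_le_ofReal_exp_llr {μ ν : Measure X} {x : X} (hx : μ.rnDeriv ν x ≠ ∞) :
    μ.rnDeriv ν x ≤ ENNReal.ofReal (exp (llr μ ν x)) := by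
  rcases eq_or_ne (μ.rnDeriv ν x) 0 with h0 | h0
  · simp [h0]
  · rw [llr, exp_log (ENNReal.toReal_pos h0 hx), ENNReal.ofReal_toReal hx]

lemma restrict_pi_le_exp_smul_pi {ι : Type*} [Fintype ι] {μ ν : Measure X} [SigmaFinite μ]
    [IsProbabilityMeasure ν] (hμν : μ ≪ ν) (c : ℝ) :
    (Measure.pi fun _ : ι => μ).restrict {y | ∑ i, llr μ ν (y i) ≤ c}
      ≤ ENNReal.ofReal (exp c) • Measure.pi fun _ : ι => ν := by
  set B := {y : ι → X | ∑ i, llr μ ν (y i) ≤ c}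
  have hB : MeasurableSet B := measurableSet_le
    (Finset.measurable_sum _ fun i _ => (measurable_llr μ ν).comp (measurable_pi_apply i))
    measurable_const
  have hfin : ∀ᵐ y ∂(Measure.pi fun _ : ι => ν), ∀ i, μ.rnDeriv ν (y i) ≠ ∞ :=
    ae_all_iff.2 fun i => (Measure.quasiMeasurePreserving_eval (fun _ : ι => ν) i).ae
      (Measure.rnDeriv_ne_top μ ν)
  have hdens : ∀ᵐ y ∂(Measure.pi fun _ : ι => ν), y ∈ B →
      ∏ i, μ.rnDeriv ν (y i) ≤ ENNReal.ofReal (exp c) := by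
    filter_upwards [hfin] with y hy hyB
    calc ∏ i, μ.rnDeriv ν (y i) ≤ ∏ i, ENNReal.ofReal (exp (llr μ ν (y i))) :=
          Finset.prod_le_prod' fun i _ => rnDeriv_le_ofReal_exp_llr (hy i)
      _ = ENNReal.ofReal (exp (∑ i, llr μ ν (y i))) := by
          rw [exp_sum, ENNReal.ofReal_prod_of_nonneg fun i _ => (exp_pos _).le]
      _ ≤ ENNReal.ofReal (exp c) := ENNReal.ofReal_le_ofReal (exp_le_exp.2 hyB)
  refine Measure.le_iff.2 fun s hs => ?_
  rw [Measure.restrict_apply hs, pi_eq_withDensity_prod_rnDeriv hμν,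
    withDensity_apply _ (hs.inter hB), Measure.smul_apply, smul_eq_mul]
  calc ∫⁻ y in s ∩ B, ∏ i, μ.rnDeriv ν (y i) ∂(Measure.pi fun _ : ι => ν)
      ≤ ∫⁻ _ in s ∩ B, ENNReal.ofReal (exp c) ∂(Measure.pi fun _ : ι => ν) :=
        setLIntegral_mono_ae' (hs.inter hB) (hdens.mono fun y hy hys => hy hys.2)
    _ ≤ ENNReal.ofReal (exp c) * (Measure.pi fun _ : ι => ν) s := by
        rw [setLIntegral_const]
        gcongr
        exact inter_subset_left

lemma ofReal_one_sub_sub_le_measure_inter {α : Type*} [MeasurableSpace α] {μ : Measure α}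
    [IsProbabilityMeasure μ] {s t : Set α} {a b : ℝ} (ha : 0 ≤ a) (hb : 0 ≤ b)
    (hs : μ sᶜ ≤ ENNReal.ofReal a) (ht : μ tᶜ ≤ ENNReal.ofReal b) :
    ENNReal.ofReal (1 - a - b) ≤ μ (s ∩ t) := by
  rw [ENNReal.ofReal_sub _ hb, ENNReal.ofReal_sub _ ha, ENNReal.ofReal_one, tsub_tsub,
    tsub_le_iff_right, ← measure_univ (μ := μ)]
  calc μ univ ≤ μ (s ∩ t) + μ (s ∩ t)ᶜ := measure_univ_le_add_compl _
    _ ≤ μ (s ∩ t) + (μ sᶜ + μ tᶜ) := by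
        gcongr
        rw [compl_inter]
        exact measure_union_le _ _
    _ ≤ μ (s ∩ t) + (ENNReal.ofReal a + ENNReal.ofReal b) := by gcongr

lemma MeasureTheory.Measure.prod_inter_univ_prod_le_mul {α β : Type*} [MeasurableSpace α]
    [MeasurableSpace β] {μ : Measure α} [SFinite μ] {ν₁ ν₂ : Measure β} [SFinite ν₁] [SFinite ν₂]
    {B : Set β} {C : ℝ≥0∞} (h : ν₁.restrict B ≤ C • ν₂) {A : Set (α × β)} (hA : MeasurableSet A) :
    (μ.prod ν₁) (A ∩ univ ×ˢ B) ≤ C * (μ.prod ν₂) A := by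
  rw [← Measure.restrict_apply hA, ← Measure.prod_restrict, Measure.restrict_univ,
    Measure.prod_apply hA, Measure.prod_apply hA,
    ← lintegral_const_mul _ (measurable_measure_prodMk_left hA)]
  exact lintegral_mono fun x => h _

lemma MeasureTheory.Measure.prod_univ_prod_compl {α β : Type*} [MeasurableSpace α]
    [MeasurableSpace β] (μ : Measure α) [IsProbabilityMeasure μ] {ν : Measure β} [SFinite ν]
    (B : Set β) : (μ.prod ν) (univ ×ˢ B)ᶜ = ν Bᶜ := by
  rw [compl_prod_eq_union, compl_univ, empty_prod, empty_union, Measure.prod_prod, measure_univ,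
    one_mul]

lemma neg_inv_mul_elog_le {β : ℝ≥0∞} (hβ : β ≠ ⊤) {m κ r : ℝ} (hm : 0 < m) (hκ : 0 < κ)
    (h : ENNReal.ofReal κ ≤ ENNReal.ofReal (exp (m * r)) * β) :
    ((-(1 / m) : ℝ) : EReal) * elog β ≤ ((r - log κ / m : ℝ) : EReal) := by
  have hκβ : κ ≤ exp (m * r) * β.toReal := by
    simpa [ENNReal.toReal_mul, hκ.le, (exp_pos _).le] using
      ENNReal.toReal_mono (ENNReal.mul_ne_top ENNReal.ofReal_ne_top hβ) h
  have hβpos : 0 < β.toReal := pos_of_mul_pos_right (hκ.trans_le hκβ) (exp_pos _).le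
  have hlog : log κ ≤ m * r + log β.toReal := by
    simpa [log_mul (exp_pos _).ne' hβpos.ne', log_exp] using log_le_log hκ hκβ
  rw [elog, if_neg (ENNReal.toReal_pos_iff.1 hβpos).1.ne', if_neg hβ, ← EReal.coe_mul,
    EReal.coe_le_coe_iff]
  field_simp
  linarith

lemma liminf_neg_inv_mul_elog_le {m : ℕ → ℕ} (hm : Tendsto m atTop atTop) {β : ℕ → ℝ≥0∞}
    (hβ : ∀ t, β t ≠ ⊤) {κ D : ℝ} (hκ : 0 < κ)
    (h : ∀ r > D, ∀ᶠ t in atTop, ENNReal.ofReal κ ≤ ENNReal.ofReal (exp (m t * r)) * β t) :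
    liminf (fun t => ((-(1 / (m t : ℝ)) : ℝ) : EReal) * elog (β t)) atTop ≤ D := by
  refine EReal.le_of_forall_lt_iff_le.1 fun z hz => ?_
  have hDz : D < z := by exact_mod_cast hz
  have hlim : Tendsto (fun t => (D + z) / 2 - log κ / m t) atTop (𝓝 ((D + z) / 2)) := by
    simpa using tendsto_const_nhds.sub
      (tendsto_const_nhds.div_atTop ((tendsto_natCast_atTop_atTop (R := ℝ)).comp hm))
  refine liminf_le_of_frequently_le' (Eventually.frequently ?_)
  filter_upwards [h ((D + z) / 2) (by linarith),
    hlim.eventually (gt_mem_nhds (show (D + z) / 2 < z by linarith)),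
    hm.eventually_gt_atTop 0] with t hβt hzt hmt
  exact (neg_inv_mul_elog_le (hβ t) (by exact_mod_cast hmt) hκ hβt).trans
    (EReal.coe_le_coe_iff.2 hzt.le)

end

theorem level_alpha_test_exponent_upper_unbalanced_general
    {X : Type*} [MeasurableSpace X]
    (P Q : Measure X) [IsProbabilityMeasure P] [IsProbabilityMeasure Q]
    (hKLtop : KL P Q < ⊤)
    (n m : ℕ → ℕ)
    (hm' : Tendsto m atTop atTop)
    (α : ℝ) (hα0 : 0 < α) (hα1 : α < 1)
    (A : ∀ t, Set ((Fin (n t) → X) × (Fin (m t) → X)))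
    (hA_meas : ∀ t, MeasurableSet (A t))
    -- the acceptance regions form an asymptotically level-α test:
    (hA_level : ∀ (R : Measure X), IsProbabilityMeasure R →
      Filter.limsup (fun t =>
        ((Measure.pi fun _ : Fin (n t) => R).prod (Measure.pi fun _ : Fin (m t) => R)) ((A t)ᶜ))
        atTop ≤ ENNReal.ofReal α) :
    Filter.liminf (fun t =>
        ((-(1 / (m t : ℝ)) : ℝ) : EReal) *
          elog (((Measure.pi fun _ : Fin (n t) => P).prod
            (Measure.pi fun _ : Fin (m t) => Q)) (A t))) atTop
      ≤ ((KL P Q : ℝ≥0∞) : EReal) := by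
  obtain ⟨hac, hint⟩ := KL_lt_top_iff.1 hKLtop
  have hKL : ((∫ x, llr P Q x ∂P : ℝ) : EReal) ≤ ((KL P Q : ℝ≥0∞) : EReal) := by
    rw [KL, if_pos ⟨hac, hint⟩, EReal.coe_ennreal_ofReal]
    exact EReal.coe_le_coe_iff.2 (le_max_left _ _)
  have hδ : 0 < (1 - α) / 3 := by linarith
  refine le_trans (liminf_neg_inv_mul_elog_le hm' (fun t => measure_ne_top _ _) hδ
    fun r hr => ?_) hKL
  have hlevel : ∀ᶠ t in atTop,
      ((Measure.pi fun _ : Fin (n t) => P).prod (Measure.pi fun _ : Fin (m t) => P)) ((A t)ᶜ)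
        ≤ ENNReal.ofReal (α + (1 - α) / 3) :=
    (eventually_lt_of_limsup_lt ((hA_level P inferInstance).trans_lt
      ((ENNReal.ofReal_lt_ofReal_iff (by linarith)).2 (by linarith)))).mono fun _ => le_of_lt
  have hlln : ∀ᶠ t in atTop, (Measure.pi fun _ : Fin (m t) => P)
      {y | ∑ i, llr P Q (y i) ≤ m t * r}ᶜ ≤ ENNReal.ofReal ((1 - α) / 3) := by
    simpa only [compl_ofPred, not_le] using
      hm'.eventually ((tendsto_measure_pi_sum_gt P (measurable_llr P Q) hint hr).eventually
        (ge_mem_nhds (ENNReal.ofReal_pos.2 hδ)))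
  filter_upwards [hlevel, hlln] with t hAc hBc
  calc ENNReal.ofReal ((1 - α) / 3)
      = ENNReal.ofReal (1 - (α + (1 - α) / 3) - (1 - α) / 3) := by ring_nf
    _ ≤ _ := ofReal_one_sub_sub_le_measure_inter (by linarith) hδ.le hAc
        ((Measure.prod_univ_prod_compl _ _).trans_le hBc)
    _ ≤ _ := Measure.prod_inter_univ_prod_le_mul (restrict_pi_le_exp_smul_pi hac _) (hA_meas t)

/-- **Optimality upper bound on the type-II error exponent (unbalanced sample sizes).** -/
theorem level_alpha_test_exponent_upper_unbalanced
    {X : Type*} [TopologicalSpace X] [PolishSpace X] [MeasurableSpace X] [BorelSpace X]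
    (P Q : Measure X) [IsProbabilityMeasure P] [IsProbabilityMeasure Q] (hPQ : P ≠ Q)
    (hKL0 : 0 < KL P Q) (hKLtop : KL P Q < ⊤)
    (n m : ℕ → ℕ) (hn : ∀ t, 0 < n t) (hm : ∀ t, 0 < m t)
    (hn' : Tendsto n atTop atTop) (hm' : Tendsto m atTop atTop)
    (hnm : Tendsto (fun t => (n t : ℝ) / (m t : ℝ)) atTop atTop)
    (α : ℝ) (hα0 : 0 < α) (hα1 : α < 1)
    (A : ∀ t, Set ((Fin (n t) → X) × (Fin (m t) → X)))
    (hA_meas : ∀ t, MeasurableSet (A t))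
    -- the acceptance regions form an asymptotically level-α test:
    (hA_level : ∀ (R : Measure X), IsProbabilityMeasure R →
      Filter.limsup (fun t =>
        ((Measure.pi fun _ : Fin (n t) => R).prod (Measure.pi fun _ : Fin (m t) => R)) ((A t)ᶜ))
        atTop ≤ ENNReal.ofReal α) :
    Filter.liminf (fun t =>
        ((-(1 / (m t : ℝ)) : ℝ) : EReal) *
          elog (((Measure.pi fun _ : Fin (n t) => P).prod
            (Measure.pi fun _ : Fin (m t) => Q)) (A t))) atTop
      ≤ ((KL P Q : ℝ≥0∞) : EReal) :=
  level_alpha_test_exponent_upper_unbalanced_general P Q hKLtop n m hm' α hα0 hα1 A hA_meas hA_level
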